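/- The language {g(aⁿbⁿ) | n ≥ 1} of unranked terms with root g whose sequence of children is n copies of leaf a followed by n copies of leaf b is not recognizable by any hedge automaton, but is recognized by a hedge automaton extended with one collapsing transition over a finite language. -/

import Mathlib

/-- Unranked terms over an alphabet `α`: a node labeled by a symbol of `α`
with a hedge (finite list) of subterms. -/
inductive UTerm (α : Type) : Type
  | node : α → List (UTerm α) → UTerm α

/-- A hedge automaton: transitions `a(L) → q` with `L ⊆ Q*` a regular word language. -/
structure HA (α Q : Type) where
  final : Set Q
  trans : List (α × Language Q × Q)
  regular : ∀ r ∈ trans, r.2.1.IsRegular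

/-- Bottom-up reduction of a term to a state. -/
inductive HA.Reduce {α Q : Type} (A : HA α Q) : UTerm α → Q → Prop
  | node {a : α} {ts : List (UTerm α)} {qs : List Q} {L : Language Q} {q : Q} :
      (a, L, q) ∈ A.trans → qs ∈ L → ts.length = qs.length →
      (∀ p ∈ List.zip ts qs, A.Reduce p.1 p.2) →
      A.Reduce (UTerm.node a ts) q

/-- Language of terms accepted by a hedge automaton. -/
def HA.lang {α Q : Type} (A : HA α Q) : Set (UTerm α) :=
  { t | ∃ q ∈ A.final, A.Reduce t q }

/-- A set of terms is a hedge-automaton language. -/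
def IsHALang {α : Type} (L : Set (UTerm α)) : Prop :=
  ∃ (Q : Type) (_ : Fintype Q) (A : HA α Q), A.lang = L

/-- A hedge automaton extended with collapsing transitions `L → q`. -/
structure EHA (α Q : Type) where
  final : Set Q
  trans : List (α × Language Q × Q)
  regular : ∀ r ∈ trans, r.2.1.IsRegular
  collapse : List (Language Q × Q)

/-- A state viewed as a leaf of a mixed hedge over `Σ ∪ Q`. -/
def stLeaf {α Q : Type} (q : Q) : UTerm (α ⊕ Q) := UTerm.node (Sum.inr q) []

mutual
  def embedT {α Q : Type} : UTerm α → UTerm (α ⊕ Q)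
    | UTerm.node a ts => UTerm.node (Sum.inl a) (embedH ts)
  def embedH {α Q : Type} : List (UTerm α) → List (UTerm (α ⊕ Q))
    | [] => []
    | t :: ts => embedT t :: embedH ts
end

/-- Move relation of an extended HA on mixed hedges over `Σ ∪ Q`. -/
inductive EHA.Move {α Q : Type} (A : EHA α Q) :
    List (UTerm (α ⊕ Q)) → List (UTerm (α ⊕ Q)) → Prop
  | trans {a : α} {L : Language Q} {q : Q} {qs : List Q} :
      (a, L, q) ∈ A.trans → qs ∈ L →
      A.Move [UTerm.node (Sum.inl a) (qs.map stLeaf)] [stLeaf q]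
  | collapse {L : Language Q} {q : Q} {qs : List Q} :
      (L, q) ∈ A.collapse → qs ∈ L →
      A.Move (qs.map stLeaf) [stLeaf q]
  | context {u v h h' : List (UTerm (α ⊕ Q))} :
      A.Move h h' → A.Move (u ++ h ++ v) (u ++ h' ++ v)
  | under {f : α ⊕ Q} {h h' : List (UTerm (α ⊕ Q))} :
      A.Move h h' → A.Move [UTerm.node f h] [UTerm.node f h']

/-- Terms accepted by an extended HA. -/
def EHA.termLang {α Q : Type} (A : EHA α Q) : Set (UTerm α) :=
  { t | ∃ q ∈ A.final, Relation.ReflTransGen A.Move [embedT t] [stLeaf q] }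

/-- The alphabet `{g, a, b}` as `Fin 3` with `g = 0`, `a = 1`, `b = 2`;
the term `g(aⁿbⁿ)`. -/
def gab (n : ℕ) : UTerm (Fin 3) :=
  UTerm.node 0
    (List.replicate n (UTerm.node 1 []) ++ List.replicate n (UTerm.node 2 []))


/-!
The children of the root of `g(aⁿbⁿ)` are read by a hedge automaton through a regular word
language, so once `n` exceeds a pumping length of all transition languages, the word of states of
the children can be pumped inside its first `n` letters, i.e. among the states of the `a`-leaves.
The pumped word is a run on `g(aⁿ⁺ᵏbⁿ)`, which would then be accepted as well.

The extended automaton collapses `q_a q_b` and `q_a q q_b` to `q`, so it reduces `aⁿbⁿ` from the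
inside out. It accepts nothing else because every move preserves the pure hedges a mixed hedge
denotes when each state stands for the hedges it can have been reached from.
-/

open Relation

namespace Language

variable {α : Type*}

theorem IsRegular.of_finite {L : Language α} (hL : L.Finite) : L.IsRegular := by
  refine .of_finite_range_leftQuotient <|
    (hL.biUnion fun w _ => w.tails.finite_toSet).finite_subsets.subset ?_
  rintro _ ⟨x, rfl⟩ y hy
  exact Set.mem_biUnion hy ((List.mem_tails _ _).2 (List.suffix_append x y))

def HasPumpingLength (L : Language α) (p : ℕ) : Prop :=
  ∀ w ∈ L, p ≤ w.length → ∃ x y z, w = x ++ y ++ z ∧ (x ++ y).length ≤ p ∧ y ≠ [] ∧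
    x ++ y ++ y ++ z ∈ L

theorem HasPumpingLength.mono {L : Language α} {p q : ℕ} (h : L.HasPumpingLength p)
    (hpq : p ≤ q) : L.HasPumpingLength q := fun w hw hq => by
  obtain ⟨x, y, z, rfl, hxy, hy, hpump⟩ := h w hw (hpq.trans hq)
  exact ⟨x, y, z, rfl, hxy.trans hpq, hy, hpump⟩

theorem IsRegular.exists_hasPumpingLength {L : Language α} (h : L.IsRegular) :
    ∃ p, L.HasPumpingLength p := by
  obtain ⟨σ, _, M, rfl⟩ := h
  refine ⟨Fintype.card σ, fun w hw hlen => ?_⟩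
  obtain ⟨x, y, z, rfl, hxy, hy, hpump⟩ := M.pumping_lemma hw hlen
  refine ⟨x, y, z, rfl, by simpa using hxy, hy, hpump ?_⟩
  have hyy : y ++ y ∈ KStar.kstar ({y} : Language α) := mem_kstar.2 ⟨[y, y], by simp, by simp; rfl⟩
  exact ⟨x ++ (y ++ y), ⟨x, rfl, y ++ y, hyy, rfl⟩, z, rfl, by simp⟩

theorem exists_hasPumpingLength_of_forall_isRegular (Ls : List (Language α))
    (h : ∀ L ∈ Ls, L.IsRegular) : ∃ p, ∀ L ∈ Ls, L.HasPumpingLength p := by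
  induction Ls with
  | nil => exact ⟨0, by simp⟩
  | cons L Ls ih =>
    obtain ⟨p, hp⟩ := (h L List.mem_cons_self).exists_hasPumpingLength
    obtain ⟨q, hq⟩ := ih fun L' hL' => h L' (List.mem_cons_of_mem L hL')
    refine ⟨max p q, ?_⟩
    rintro L' (_ | ⟨_, hL'⟩)
    · exact hp.mono (le_max_left p q)
    · exact (hq L' hL').mono (le_max_right p q)

end Language

namespace List

variable {α β : Type*}

theorem forall₂_replicate_left_iff {R : α → β → Prop} {a : α} {n : ℕ} {l : List β} :
    Forall₂ R (replicate n a) l ↔ l.length = n ∧ ∀ b ∈ l, R a b := by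
  induction n generalizing l with
  | zero => simp +contextual [forall₂_nil_left_iff, length_eq_zero_iff]
  | succ n ih => cases l <;> simp [replicate_succ, ih, and_left_comm]

theorem forall₂_append_left_iff {R : α → β → Prop} {l₁ l₂ : List α} {l : List β} :
    Forall₂ R (l₁ ++ l₂) l ↔ ∃ m₁ m₂, l = m₁ ++ m₂ ∧ Forall₂ R l₁ m₁ ∧ Forall₂ R l₂ m₂ := by
  induction l₁ generalizing l with
  | nil => simp
  | cons a l₁ ih =>
    simp only [cons_append, forall₂_cons_left_iff, ih]
    constructor
    · rintro ⟨b, _, hab, ⟨m₁, m₂, rfl, h₁, h₂⟩, rfl⟩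
      exact ⟨b :: m₁, m₂, rfl, ⟨b, m₁, hab, h₁, rfl⟩, h₂⟩
    · rintro ⟨_, m₂, rfl, ⟨b, m₁, hab, h₁, rfl⟩, h₂⟩
      exact ⟨b, m₁ ++ m₂, hab, ⟨m₁, m₂, rfl, h₁, h₂⟩, rfl⟩

theorem replicate_append_replicate_inj {a b : α} (hab : a ≠ b) {m n m' n' : ℕ} :
    replicate m a ++ replicate n b = replicate m' a ++ replicate n' b ↔ m = m' ∧ n = n' := by
  classical
  refine ⟨fun h => ⟨?_, ?_⟩, fun ⟨rfl, rfl⟩ => rfl⟩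
  · simpa [count_replicate, hab.symm] using congrArg (count a) h
  · simpa [count_replicate, hab] using congrArg (count b) h

end List

namespace HA

variable {α Q : Type} (A : HA α Q)

theorem reduce_node_iff {a : α} {ts : List (UTerm α)} {q : Q} :
    A.Reduce (.node a ts) q ↔
      ∃ L qs, (a, L, q) ∈ A.trans ∧ qs ∈ L ∧ List.Forall₂ A.Reduce ts qs := by
  constructor
  · rintro ⟨htr, hqs, hlen, hzip⟩
    exact ⟨_, _, htr, hqs, List.forall₂_iff_zip.2 ⟨hlen, fun h => hzip _ h⟩⟩
  · rintro ⟨L, qs, htr, hqs, hts⟩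
    exact .node htr hqs hts.length_eq fun p hp => List.forall₂_zip hts hp

theorem exists_reduce_pump_replicate : ∃ N, ∀ (a : α) (t : UTerm α) (ts : List (UTerm α))
    (q : Q) (n : ℕ), N ≤ n → A.Reduce (.node a (List.replicate n t ++ ts)) q →
      ∃ k > 0, A.Reduce (.node a (List.replicate (n + k) t ++ ts)) q := by
  obtain ⟨N, hN⟩ := Language.exists_hasPumpingLength_of_forall_isRegular
    (A.trans.map (·.2.1)) (by simpa using fun _ _ _ h => A.regular _ h)
  refine ⟨N, fun a t ts q n hn hred => ?_⟩
  obtain ⟨L, qs, htr, hqs, hchildren⟩ := A.reduce_node_iff.1 hred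
  obtain ⟨qt, qr, rfl, hqt, hqr⟩ := List.forall₂_append_left_iff.1 hchildren
  obtain ⟨hqt_length, hqt_reduce⟩ := List.forall₂_replicate_left_iff.1 hqt
  obtain ⟨x, y, z, hxyz, hxy, hy, hpump⟩ :=
    hN L (List.mem_map.2 ⟨_, htr, rfl⟩) _ hqs (by rw [List.length_append]; omega)
  obtain ⟨z', rfl⟩ : x ++ y <+: qt :=
    List.prefix_of_prefix_length_le ⟨z, hxyz.symm⟩ (List.prefix_append qt qr) (by omega)
  obtain rfl : z' ++ qr = z := by simpa [List.append_assoc] using hxyz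
  refine ⟨y.length, List.length_pos_iff.2 hy, A.reduce_node_iff.2
    ⟨L, x ++ y ++ y ++ z' ++ qr, htr, by simpa [List.append_assoc] using hpump, ?_⟩⟩
  refine List.forall₂_append_left_iff.2 ⟨_, qr, rfl, ?_, hqr⟩
  refine List.forall₂_replicate_left_iff.2 ⟨?_, fun s hs => hqt_reduce s ?_⟩
  · simp only [List.length_append] at hqt_length ⊢
    omega
  · simp only [List.mem_append] at hs ⊢
    tauto

end HA

theorem not_isHALang_gab : ¬ IsHALang {t : UTerm (Fin 3) | ∃ n ≥ 1, t = gab n} := by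
  rintro ⟨Q, _, A, hA⟩
  obtain ⟨N, hN⟩ := A.exists_reduce_pump_replicate
  obtain ⟨q, hq, hred⟩ : gab (N + 1) ∈ A.lang := hA ▸ ⟨N + 1, by omega, rfl⟩
  obtain ⟨k, hk, hpumped⟩ := hN 0 _ _ q (N + 1) (by omega) hred
  have hmem : _ ∈ A.lang := ⟨q, hq, hpumped⟩
  obtain ⟨m, -, hm⟩ := hA ▸ hmem
  have := (List.replicate_append_replicate_inj (by simp)).1 (UTerm.node.inj hm).2
  omega

theorem embedT_leaf {α Q : Type} (a : α) : embedT (Q := Q) (.node a []) = .node (.inl a) [] := by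
  rw [embedT, embedH]

theorem embedH_eq_map {α Q : Type} (ts : List (UTerm α)) :
    embedH (Q := Q) ts = ts.map embedT := by
  induction ts with
  | nil => rw [embedH, List.map_nil]
  | cons t ts ih => rw [embedH, ih, List.map_cons]

namespace EHA

variable {α Q : Type}

/-- `Denotes sem h hs`: `hs` arises from `h` by replacing each state node `q` by a hedge of
`sem q`. The children of a state node are ignored, so that moves below it are harmless. -/
inductive Denotes (sem : Q → Set (List (UTerm α))) :
    List (UTerm (α ⊕ Q)) → List (UTerm α) → Prop
  | nil : Denotes sem [] []
  | symb {a : α} {ts : List (UTerm (α ⊕ Q))} {hs : List (UTerm α)}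
      {rest : List (UTerm (α ⊕ Q))} {rest' : List (UTerm α)} :
      Denotes sem ts hs → Denotes sem rest rest' →
      Denotes sem (.node (.inl a) ts :: rest) (.node a hs :: rest')
  | state {q : Q} {ts : List (UTerm (α ⊕ Q))} {hs : List (UTerm α)}
      {rest : List (UTerm (α ⊕ Q))} {rest' : List (UTerm α)} :
      hs ∈ sem q → Denotes sem rest rest' →
      Denotes sem (.node (.inr q) ts :: rest) (hs ++ rest')

namespace Denotes

variable {sem : Q → Set (List (UTerm α))}

theorem append {h₁ h₂ : List (UTerm (α ⊕ Q))} {hs₁ hs₂ : List (UTerm α)}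
    (d₁ : Denotes sem h₁ hs₁) (d₂ : Denotes sem h₂ hs₂) :
    Denotes sem (h₁ ++ h₂) (hs₁ ++ hs₂) := by
  induction d₁ with
  | nil => exact d₂
  | symb d _ _ ih => exact symb d ih
  | state hq _ ih => simpa [List.append_assoc] using state hq ih

theorem append_left_iff {h₁ h₂ : List (UTerm (α ⊕ Q))} {hs : List (UTerm α)} :
    Denotes sem (h₁ ++ h₂) hs ↔
      ∃ hs₁ hs₂, hs = hs₁ ++ hs₂ ∧ Denotes sem h₁ hs₁ ∧ Denotes sem h₂ hs₂ := by
  constructor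
  · intro d
    induction h₁ generalizing hs with
    | nil => exact ⟨[], hs, rfl, nil, d⟩
    | cons t h₁ ih =>
      cases d with
      | symb d drest =>
        obtain ⟨hs₁, hs₂, rfl, d₁, d₂⟩ := ih drest
        exact ⟨_ :: hs₁, hs₂, rfl, symb d d₁, d₂⟩
      | state hq drest =>
        obtain ⟨hs₁, hs₂, rfl, d₁, d₂⟩ := ih drest
        exact ⟨_ ++ hs₁, hs₂, by rw [List.append_assoc], state hq d₁, d₂⟩
  · rintro ⟨_, _, rfl, d₁, d₂⟩
    exact d₁.append d₂

@[simp]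
theorem nil_iff {hs : List (UTerm α)} : Denotes sem [] hs ↔ hs = [] :=
  ⟨fun d => by cases d; rfl, fun h => h ▸ nil⟩

@[simp]
theorem stLeaf_cons_iff {q : Q} {h : List (UTerm (α ⊕ Q))} {hs : List (UTerm α)} :
    Denotes sem (stLeaf q :: h) hs ↔
      ∃ hs₁ hs₂, hs = hs₁ ++ hs₂ ∧ hs₁ ∈ sem q ∧ Denotes sem h hs₂ := by
  constructor
  · intro d
    cases d with
    | state hq d => exact ⟨_, _, rfl, hq, d⟩
  · rintro ⟨_, _, rfl, hq, d⟩
    exact state hq d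

theorem stLeaf_iff {q : Q} {hs : List (UTerm α)} : Denotes sem [stLeaf q] hs ↔ hs ∈ sem q := by
  simp

end Denotes

theorem denotes_embedH {sem : Q → Set (List (UTerm α))} :
    ∀ ts : List (UTerm α), Denotes sem (embedH ts) ts
  | [] => by rw [embedH]; exact .nil
  | .node _ cs :: ts => by
    rw [embedH, embedT]
    exact .symb (denotes_embedH cs) (denotes_embedH ts)

structure IsSound (A : EHA α Q) (sem : Q → Set (List (UTerm α))) : Prop where
  trans {a : α} {L : Language Q} {q : Q} {qs : List Q} {hs : List (UTerm α)} :
    (a, L, q) ∈ A.trans → qs ∈ L → Denotes sem (qs.map stLeaf) hs → [.node a hs] ∈ sem q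
  collapse {L : Language Q} {q : Q} {qs : List Q} {hs : List (UTerm α)} :
    (L, q) ∈ A.collapse → qs ∈ L → Denotes sem (qs.map stLeaf) hs → hs ∈ sem q

variable {A : EHA α Q} {sem : Q → Set (List (UTerm α))}

theorem Move.denotes (hA : A.IsSound sem) {h h' : List (UTerm (α ⊕ Q))} (hm : A.Move h h')
    {hs : List (UTerm α)} (d : Denotes sem h hs) : Denotes sem h' hs := by
  induction hm generalizing hs with
  | trans htr hqs =>
    cases d with
    | symb d drest =>
      cases drest
      exact Denotes.stLeaf_iff.2 (hA.trans htr hqs d)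
  | collapse htr hqs => exact Denotes.stLeaf_iff.2 (hA.collapse htr hqs d)
  | context _ ih =>
    obtain ⟨_, hs₃, rfl, d₁₂, d₃⟩ := Denotes.append_left_iff.1 d
    obtain ⟨hs₁, hs₂, rfl, d₁, d₂⟩ := Denotes.append_left_iff.1 d₁₂
    exact (d₁.append (ih d₂)).append d₃
  | under _ ih =>
    cases d with
    | symb d drest => exact .symb (ih d) drest
    | state hq drest => exact .state hq drest

theorem IsSound.denotes_of_reflTransGen (hA : A.IsSound sem) {h h' : List (UTerm (α ⊕ Q))}
    (hm : ReflTransGen A.Move h h') {hs : List (UTerm α)} (d : Denotes sem h hs) :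
    Denotes sem h' hs := by
  induction hm with
  | refl => exact d
  | tail _ hm ih => exact hm.denotes hA ih

theorem IsSound.termLang_subset (hA : A.IsSound sem) :
    A.termLang ⊆ {t | ∃ q ∈ A.final, [t] ∈ sem q} := by
  rintro t ⟨q, hq, hm⟩
  refine ⟨q, hq, Denotes.stLeaf_iff.1 (hA.denotes_of_reflTransGen hm ?_)⟩
  simpa [embedH] using denotes_embedH (sem := sem) [t]

theorem Move.leaf {a : α} {L : Language Q} {q : Q} (htr : (a, L, q) ∈ A.trans) (hL : [] ∈ L) :
    A.Move [.node (.inl a) []] [stLeaf q] :=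
  Move.trans (qs := []) htr hL

theorem Move.append_left {h h' : List (UTerm (α ⊕ Q))} (u : List (UTerm (α ⊕ Q)))
    (hm : A.Move h h') : A.Move (u ++ h) (u ++ h') := by
  simpa using Move.context (u := u) (v := []) hm

theorem Move.append_right {h h' : List (UTerm (α ⊕ Q))} (v : List (UTerm (α ⊕ Q)))
    (hm : A.Move h h') : A.Move (h ++ v) (h' ++ v) := by
  simpa using Move.context (u := []) (v := v) hm

end EHA

inductive GabState
  | q
  | qa
  | qb
  | qf
  deriving DecidableEq

section GabAutomaton

open GabState EHA

instance : Fintype GabState :=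
  Fintype.ofList [q, qa, qb, qf] (by rintro (_ | _ | _ | _) <;> simp)

def abHedge (n : ℕ) : List (UTerm (Fin 3)) :=
  List.replicate n (.node 1 []) ++ List.replicate n (.node 2 [])

theorem gab_eq_node_abHedge (n : ℕ) : gab n = .node 0 (abHedge n) := rfl

theorem abHedge_succ (n : ℕ) :
    abHedge (n + 1) = .node 1 [] :: (abHedge n ++ [.node 2 []]) := by
  rw [abHedge, abHedge, List.replicate_succ, List.replicate_succ']
  simp

/-- Besides `q_a q_b → q`, the collapse `q_a q q_b → q` lets collapses nest. -/
def gabCollapse : Language GabState := {[qa, qb], [qa, q, qb]}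

def gabEHA : EHA (Fin 3) GabState where
  final := {qf}
  trans := [(1, {[]}, qa), (2, {[]}, qb), (0, {[q]}, qf)]
  regular := by
    simp only [List.mem_cons, List.not_mem_nil, or_false]
    rintro _ (rfl | rfl | rfl) <;> exact .of_finite (Set.finite_singleton _)
  collapse := [(gabCollapse, q)]

/-- The hedges of letters from which each state of `gabEHA` can be reached. -/
def gabSem : GabState → Set (List (UTerm (Fin 3)))
  | q => {h | ∃ n ≥ 1, h = abHedge n}
  | qa => {[.node 1 []]}
  | qb => {[.node 2 []]}
  | qf => {h | ∃ n ≥ 1, h = [gab n]}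

theorem gabEHA_isSound : gabEHA.IsSound gabSem where
  trans htr hqs d := by
    simp only [gabEHA, List.mem_cons, List.not_mem_nil, or_false, Prod.mk.injEq] at htr
    rcases htr with ⟨rfl, rfl, rfl⟩ | ⟨rfl, rfl, rfl⟩ | ⟨rfl, rfl, rfl⟩ <;> obtain rfl := hqs
    · simpa [gabSem] using d
    · simpa [gabSem] using d
    · obtain ⟨n, hn, rfl⟩ := Denotes.stLeaf_iff.1 d
      exact ⟨n, hn, rfl⟩
  collapse htr hqs d := by
    simp only [gabEHA, List.mem_cons, List.not_mem_nil, or_false, Prod.mk.injEq] at htr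
    obtain ⟨rfl, rfl⟩ := htr
    rcases hqs with rfl | rfl <;>
      simp only [List.map_cons, List.map_nil, Denotes.stLeaf_cons_iff, Denotes.nil_iff] at d
    · obtain ⟨_, _, rfl, rfl, _, _, rfl, rfl, rfl⟩ := d
      exact ⟨1, le_rfl, rfl⟩
    · obtain ⟨_, _, rfl, rfl, _, _, rfl, ⟨n, hn, rfl⟩, _, _, rfl, rfl, rfl⟩ := d
      exact ⟨n + 1, by omega, (abHedge_succ n).symm⟩

theorem gabEHA_reflTransGen_abHedge {n : ℕ} (hn : 1 ≤ n) :
    ReflTransGen gabEHA.Move (embedH (abHedge n)) [stLeaf q] := by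
  have move_a : gabEHA.Move [.node (.inl 1) []] [stLeaf qa] := .leaf (.head _) rfl
  have move_b : gabEHA.Move [.node (.inl 2) []] [stLeaf qb] := .leaf (.tail _ (.head _)) rfl
  have move_collapse {qs : List GabState} (hqs : qs ∈ gabCollapse) :
      gabEHA.Move (qs.map stLeaf) [stLeaf q] :=
    .collapse (.head _) hqs
  rw [embedH_eq_map]
  induction n, hn using Nat.le_induction with
  | base =>
    simp only [abHedge, List.replicate_one, List.singleton_append, List.map_cons, List.map_nil,
      embedT_leaf]
    exact .head (move_a.append_right _) <|
      .head (move_b.append_left [stLeaf qa]) (.single (move_collapse (.inl rfl)))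
  | succ n _ ih =>
    simp only [abHedge_succ, List.map_cons, List.map_append, List.map_nil, embedT_leaf]
    have inner : ReflTransGen gabEHA.Move
        (.node (.inl 1) [] :: (List.map embedT (abHedge n) ++ [.node (.inl 2) []]))
        [.node (.inl 1) [], stLeaf q, .node (.inl 2) []] :=
      ih.lift (fun h => .node (.inl 1) [] :: (h ++ [.node (.inl 2) []]))
        fun _ _ hm => .context (u := [.node (.inl 1) []]) (v := [.node (.inl 2) []]) hm
    exact ((inner.tail (move_a.append_right _)).tail
      (move_b.append_left [stLeaf qa, stLeaf q])).tail (move_collapse (.inr rfl))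

theorem gabEHA_termLang : gabEHA.termLang = {t | ∃ n ≥ 1, t = gab n} := by
  refine subset_antisymm (fun t ht => ?_) ?_
  · obtain ⟨_, rfl, n, hn, ht⟩ := gabEHA_isSound.termLang_subset ht
    exact ⟨n, hn, List.singleton_inj.1 ht⟩
  · rintro _ ⟨n, hn, rfl⟩
    have move_g : gabEHA.Move [.node (.inl 0) [stLeaf q]] [stLeaf qf] :=
      .trans (qs := [q]) (.tail _ (.tail _ (.head _))) rfl
    refine ⟨qf, rfl, .tail ?_ move_g⟩
    rw [gab_eq_node_abHedge, embedT]
    exact (gabEHA_reflTransGen_abHedge hn).lift (fun h => [UTerm.node (Sum.inl 0) h])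
      fun _ _ => Move.under

end GabAutomaton

/-- `{g(aⁿbⁿ) | n ≥ 1}` is not a hedge-automaton language, but it
is recognized by a hedge automaton extended with a single collapsing transition
over a finite language. -/
theorem gab_not_ha_but_eha :
    ¬ IsHALang { t : UTerm (Fin 3) | ∃ n ≥ 1, t = gab n } ∧
    ∃ (Q : Type) (_ : Fintype Q) (A : EHA (Fin 3) Q) (L : Language Q) (q : Q),
      A.collapse = [(L, q)] ∧ L.Finite ∧
      A.termLang = { t : UTerm (Fin 3) | ∃ n ≥ 1, t = gab n } :=
  ⟨not_isHALang_gab, GabState, inferInstance, gabEHA, gabCollapse, .q, rfl,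
    (Set.finite_singleton _).insert _, gabEHA_termLang⟩
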